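/- arXiv:2303.15776 — 7 statements merged into one kernel-verified Lean document; each statement's English description precedes it below -/
import Mathlib

section
/- Let p be a configuration of n points in ℝ^d, with n ≥ d, whose linear span is ℝ^d. Then the rank of the hyperconnectivity matrix H(p) equals dn − d(d+1)/2. -/
open Finset

/-- The hyperconnectivity matrix of points `p 0, …, p (n-1)` in `ℝ^d`: one row for each
pair `{i,j}` with `i < j`, with block `p j` in the columns of vertex `i`, block `-p i`
in the columns of vertex `j`, and zeros elsewhere. -/
def hyperMatrix (n d : ℕ) (p : Fin n → Fin d → ℝ) :
    Matrix {e : Fin n × Fin n // e.1 < e.2} (Fin n × Fin d) ℝ :=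
  fun e c =>
    if c.1 = e.1.1 then p e.1.2 c.2
    else if c.1 = e.1.2 then -(p e.1.1 c.2)
    else 0

/-!
A vector `x` in the kernel of `H(p)` is a family of vectors `xᵢ ∈ ℝ^d` with
`p j ⬝ᵥ xᵢ = p i ⬝ᵥ xⱼ`, i.e. the `n × n` matrix `X pᵀ` is symmetric, where `X` has rows `xᵢ`.
As the rows of `p` span `ℝ^d`, `p` has a left inverse `L`, and this forces `X = p A` for the
unique symmetric `d × d` matrix `A = L X`. So the kernel is a copy of the space of symmetric
matrices, of dimension `d(d+1)/2`, and rank–nullity gives the rank.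
-/

open Matrix Module LinearMap

namespace Matrix

variable {m k l R : Type*} [Fintype m] [Fintype k]

theorem exists_mul_eq_one_of_span_row_eq_top [CommSemiring R] [DecidableEq k] {p : Matrix m k R}
    (hp : Submodule.span R (Set.range p.row) = ⊤) : ∃ L : Matrix k m R, L * p = 1 := by
  rw [← vecMul_surjective_iff_exists_left_inverse, ← coe_vecMulLinear, ← range_eq_top,
    range_vecMulLinear, hp]

theorem isSymm_mul_transpose_iff_exists_isSymm [CommSemiring R] [DecidableEq k]
    {p : Matrix m k R} {L : Matrix k m R} (hL : L * p = 1) (X : Matrix m k R) :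
    (X * pᵀ).IsSymm ↔ ∃ A : Matrix k k R, A.IsSymm ∧ p * A = X := by
  constructor
  · intro hX
    have hpX : p * Xᵀ = X * pᵀ := by simpa [transpose_mul] using hX.eq
    have hX_eq : p * (L * X)ᵀ = X := by
      rw [transpose_mul, ← Matrix.mul_assoc, hpX, Matrix.mul_assoc, ← transpose_mul, hL,
        transpose_one, Matrix.mul_one]
    have hsymm : (L * X).IsSymm := by
      calc (L * X)ᵀ = L * p * (L * X)ᵀ := by rw [hL, Matrix.one_mul]
        _ = L * X := by rw [Matrix.mul_assoc, hX_eq]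
    exact ⟨L * X, hsymm, by rwa [hsymm.eq] at hX_eq⟩
  · rintro ⟨A, hA, rfl⟩
    rw [IsSymm, transpose_mul, transpose_mul, transpose_transpose, hA.eq, Matrix.mul_assoc]

variable (k R) in
def symmetricMatrices [Semiring R] : Submodule R (Matrix k k R) where
  carrier := {A | A.IsSymm}
  add_mem' := IsSymm.add
  zero_mem' := isSymm_zero
  smul_mem' c _ hA := hA.smul c

def symmetricMatricesEquivSym2 [Semiring R] : symmetricMatrices k R ≃ₗ[R] (Sym2 k → R) :=
  ((Equiv.subtypeEquivRight (p := (· ∈ symmetricMatrices k R))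
    fun _ => IsSymm.ext_iff.trans forall_comm).trans (Sym2.lift (α := k) (β := R))).toLinearEquiv
    { map_add _ _ := by ext z; induction z using Sym2.ind; rfl
      map_smul _ _ := by ext z; induction z using Sym2.ind; rfl }

variable (l) in
def uncurryMulLeft [CommSemiring R] (P : Matrix m k R) : Matrix k l R →ₗ[R] (m × l → R) :=
  (LinearEquiv.curry R R m l).symm.toLinearMap ∘ₗ mulLeftLinearMap l R P

theorem uncurryMulLeft_injective [CommSemiring R] [DecidableEq k] {P : Matrix m k R}
    {L : Matrix k m R} (hL : L * P = 1) : Function.Injective (uncurryMulLeft l P) :=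
  fun A B h => by
    have hPA : P * A = P * B := (LinearEquiv.curry R R m l).symm.injective h
    simpa [← Matrix.mul_assoc, hL] using congrArg (L * ·) hPA

theorem finrank_symmetricMatrices [Semiring R] [StrongRankCondition R] :
    finrank R (symmetricMatrices k R) = Fintype.card k * (Fintype.card k + 1) / 2 := by
  rw [symmetricMatricesEquivSym2.finrank_eq, finrank_fintype_fun_eq_card, Sym2.card,
    Nat.choose_two_right, Nat.add_sub_cancel, Nat.mul_comm]

end Matrix

section hyperMatrix

variable {n d : ℕ}

theorem hyperMatrix_mulVec_apply (p : Fin n → Fin d → ℝ) (x : Fin n × Fin d → ℝ) {i j : Fin n}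
    (hij : i < j) :
    (hyperMatrix n d p *ᵥ x) ⟨(i, j), hij⟩
      = (of (Function.curry x) * (of p)ᵀ) i j - (of (Function.curry x) * (of p)ᵀ) j i := by
  have hrow : hyperMatrix n d p ⟨(i, j), hij⟩
      = fun c => (Pi.single i (p j) - Pi.single j (p i) : Fin n → Fin d → ℝ) c.1 c.2 := by
    ext ⟨a, k⟩
    by_cases ha : a = i
    · subst ha; simp [hyperMatrix, hij.ne]
    · by_cases hb : a = j
      · subst hb; simp [hyperMatrix, hij.ne']
      · simp [hyperMatrix, ha, hb]
  simp only [mulVec, dotProduct, hrow, Pi.sub_apply, Pi.single_apply, ite_apply, Pi.zero_apply,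
    mul_comm, mul_sub, mul_ite, mul_zero, sum_sub_distrib, Fintype.sum_prod_type, sum_ite_irrel,
    sum_const_zero, sum_ite_eq', mem_univ, ↓reduceIte, mul_apply, of_apply, Function.curry_apply,
    transpose_apply]

theorem hyperMatrix_mulVec_eq_zero_iff (p : Fin n → Fin d → ℝ) (x : Fin n × Fin d → ℝ) :
    hyperMatrix n d p *ᵥ x = 0 ↔ (of (Function.curry x) * (of p)ᵀ).IsSymm := by
  constructor
  · intro hx
    refine IsSymm.ext fun i j => ?_
    rcases lt_trichotomy i j with hij | rfl | hij
    · have := congrFun hx ⟨(i, j), hij⟩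
      rw [hyperMatrix_mulVec_apply] at this
      exact (sub_eq_zero.mp this).symm
    · rfl
    · have := congrFun hx ⟨(j, i), hij⟩
      rw [hyperMatrix_mulVec_apply] at this
      exact sub_eq_zero.mp this
  · intro hX
    funext ⟨⟨i, j⟩, hij⟩
    rw [hyperMatrix_mulVec_apply, hX.apply, sub_self, Pi.zero_apply]

theorem ker_hyperMatrix {p : Fin n → Fin d → ℝ} {L : Matrix (Fin d) (Fin n) ℝ}
    (hL : L * of p = 1) :
    ker (hyperMatrix n d p).mulVecLin = (symmetricMatrices (Fin d) ℝ).map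
      (uncurryMulLeft (Fin d) (of p)) := by
  ext x
  rw [mem_ker, mulVecLin_apply, hyperMatrix_mulVec_eq_zero_iff,
    isSymm_mul_transpose_iff_exists_isSymm hL, Submodule.mem_map]
  exact exists_congr fun A => and_congr Iff.rfl
    (LinearEquiv.curry ℝ ℝ (Fin n) (Fin d)).symm_apply_eq.symm

end hyperMatrix

theorem hyperMatrix_rank_general (n d : ℕ) (p : Fin n → Fin d → ℝ)
    (hspan : Submodule.span ℝ (Set.range p) = ⊤) :
    (hyperMatrix n d p).rank = d * n - d * (d + 1) / 2 := by
  obtain ⟨L, hL⟩ := exists_mul_eq_one_of_span_row_eq_top (p := of p) hspan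
  have hker : finrank ℝ (ker (hyperMatrix n d p).mulVecLin) = d * (d + 1) / 2 := by
    rw [ker_hyperMatrix hL,
      ← (Submodule.equivMapOfInjective _ (uncurryMulLeft_injective hL) _).finrank_eq,
      finrank_symmetricMatrices, Fintype.card_fin]
  have hrank := (hyperMatrix n d p).mulVecLin.finrank_range_add_finrank_ker
  rw [hker, finrank_fintype_fun_eq_card, Fintype.card_prod, Fintype.card_fin, Fintype.card_fin]
    at hrank
  rw [Matrix.rank, Nat.mul_comm d n]
  omega

/-- If `n ≥ d` and the points linearly span `ℝ^d`, the rank of the hyperconnectivity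
matrix equals `dn - d(d+1)/2`. -/
theorem hyperMatrix_rank (n d : ℕ) (hnd : d ≤ n) (p : Fin n → Fin d → ℝ)
    (hspan : Submodule.span ℝ (Set.range p) = ⊤) :
    (hyperMatrix n d p).rank = d * n - d * (d + 1) / 2 :=
  hyperMatrix_rank_general n d p hspan
end

section
/- Let (c_1,…,c_n) and (c'_1,…,c'_n) be two linear dependences among points p_1,…,p_n ∈ ℝ^d (i.e. Σ c_i p_i = 0 and Σ c'_i p_i = 0). Then the vector λ indexed by pairs {i,j} with λ_{ij} = c_i c'_j − c'_i c_j is a linear dependence among the rows of the hyperconnectivity matrix H(p): for every vertex i, Σ_{j<i} λ_{ji}(−p_j) + Σ_{j>i} λ_{ij} p_j = 0. -/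
open Finset

/-! Up to the sign swap `λ_{ji} (-p_j) = λ_{ij} p_j`, the terms `j < i` and `j > i` together
form the full sum `∑ j, (c_i c'_j - c'_i c_j) p_j`, whose `j = i` term vanishes; expanding,
that sum is `c_i • ∑ c' p - c'_i • ∑ c p = 0`. -/

theorem Finset.sum_filter_lt_add_sum_filter_gt {ι M : Type*} [Fintype ι] [LinearOrder ι]
    [AddCommMonoid M] (f : ι → M) (i : ι) (hi : f i = 0) :
    ∑ j ∈ univ.filter (· < i), f j + ∑ j ∈ univ.filter (i < ·), f j = ∑ j, f j := by
  rw [← sum_union (disjoint_filter.2 fun j _ hji hij => lt_asymm hji hij),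
    ← add_sum_erase univ f (mem_univ i), hi, zero_add]
  congr 1
  ext j
  simp [lt_or_lt_iff_ne]

theorem sum_wedge_smul {ι R M : Type*} [Fintype ι] [CommRing R] [AddCommGroup M] [Module R M]
    (p : ι → M) (c c' : ι → R) (i : ι) :
    ∑ j, (c i * c' j - c' i * c j) • p j = c i • ∑ j, c' j • p j - c' i • ∑ j, c j • p j := by
  simp only [smul_sum, ← sum_sub_distrib, sub_smul, mul_smul]

/-- The exterior product of two linear dependences among the points gives a linear
dependence among the rows of the hyperconnectivity matrix: for each vertex `i`,
`Σ_{j<i} λ_{ji}·(-p j) + Σ_{j>i} λ_{ij}·(p j) = 0`, where `λ_{ij} = c_i c'_j - c'_i c_j`. -/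
theorem extprod_is_dependence (n d : ℕ) (p : Fin n → Fin d → ℝ) (c c' : Fin n → ℝ)
    (hc : ∑ i, c i • p i = 0) (hc' : ∑ i, c' i • p i = 0) :
    ∀ i : Fin n,
      (∑ j ∈ univ.filter (fun j => j < i), (c j * c' i - c' j * c i) • (-(p j)))
        + (∑ j ∈ univ.filter (fun j => i < j), (c i * c' j - c' i * c j) • p j) = 0 := by
  intro i
  have hswap : ∀ j, (c j * c' i - c' j * c i) • -p j = (c i * c' j - c' i * c j) • p j :=
    fun j => by module
  rw [sum_congr rfl fun j _ => hswap j,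
    sum_filter_lt_add_sum_filter_gt (fun j => (c i * c' j - c' i * c j) • p j) i
      (by rw [mul_comm, sub_self, zero_smul]),
    sum_wedge_smul, hc, hc', smul_zero, smul_zero, sub_zero]
end

section
/- Let K_{n1,n2} be the complete bipartite graph with left points p_1,…,p_{n1} ∈ ℝ^d and right points p'_1,…,p'_{n2} ∈ ℝ^d, each side linearly spanning ℝ^d, and min(n1,n2) ≥ d. Then the rank of the bipartite hyperconnectivity matrix equals d(n1+n2) − d². -/
/-
The kernel of the hyperconnectivity matrix consists of the vectors with left blocks `u i` and
right blocks `v j` such that `p' j ⬝ᵥ u i = p i ⬝ᵥ v j` for all `i, j`. Every `d × d` matrix `A`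
yields such a vector, `u i = A p i` and `v j = Aᵀ p' j`, and injectively because the `p i` span.
Conversely, pairing with the spanning family `p'` shows that `u` satisfies every linear relation
`l` of the `p i` (this is the annihilation of the columns by `l ⊗ m`), so `u i = A p i` for some
`A`; then `v j` and `Aᵀ p' j` have the same pairing with every `p i`, so they agree. Hence the
kernel has dimension `d²`, and rank–nullity finishes.
-/

/-- The bipartite hyperconnectivity matrix of the complete bipartite graph
`K_{n1,n2}` with left points `p` and right points `p'` in `ℝ^d`: the row of edge
`(i,j')` has block `p' j` in the columns of left vertex `i` and block `-(p i)`
in the columns of right vertex `j'`. -/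
def bipHyperMatrix (n1 n2 d : ℕ) (p : Fin n1 → Fin d → ℝ) (p' : Fin n2 → Fin d → ℝ) :
    Matrix (Fin n1 × Fin n2) ((Fin n1 ⊕ Fin n2) × Fin d) ℝ :=
  fun e c =>
    match c.1 with
    | Sum.inl i => if i = e.1 then p' e.2 c.2 else 0
    | Sum.inr j => if j = e.2 then -(p e.1 c.2) else 0

open Matrix Submodule

section SpanningFamily

variable {ι n m R : Type*} [Fintype n]

theorem eq_zero_of_forall_dotProduct_eq_zero_of_span_eq_top [CommSemiring R]
    {p : ι → n → R} (hp : span R (Set.range p) = ⊤) {w : n → R}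
    (h : ∀ i, p i ⬝ᵥ w = 0) : w = 0 := by
  classical
  have hw : dotProductBilin R R w = 0 :=
    LinearMap.ext_on_range hp fun i => by simpa [dotProduct_comm] using h i
  funext k
  simpa using LinearMap.congr_fun hw (Pi.single k 1)

theorem exists_matrix_mulVec_eq_of_span_eq_top [CommRing R] [Fintype ι]
    {p : ι → n → R} (hp : span R (Set.range p) = ⊤) {u : ι → m → R}
    (hu : ∀ c : ι → R, ∑ i, c i • p i = 0 → ∑ i, c i • u i = 0) :
    ∃ A : Matrix m n R, ∀ i, A *ᵥ p i = u i := by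
  classical
  set P := Fintype.linearCombination R p
  have hP : Function.Surjective P := by
    rw [← LinearMap.range_eq_top, Fintype.range_linearCombination, hp]
  have hker : LinearMap.ker P ≤ LinearMap.ker (Fintype.linearCombination R u) := fun c hc => by
    simp only [LinearMap.mem_ker, P, Fintype.linearCombination_apply] at hc ⊢
    exact hu c hc
  refine ⟨LinearMap.toMatrix' ((LinearMap.ker P).liftQ _ hker ∘ₗ
    (P.quotKerEquivOfSurjective hP).symm.toLinearMap), fun i => ?_⟩
  have hpi : p i = P (Pi.single i 1) := by
    simp [P, Fintype.linearCombination_apply_single]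
  rw [LinearMap.toMatrix'_mulVec, LinearMap.comp_apply, hpi, LinearEquiv.coe_coe,
    LinearMap.quotKerEquivOfSurjective_symm_apply, Submodule.liftQ_apply,
    Fintype.linearCombination_apply_single, one_smul]

end SpanningFamily

section BipHyperMatrix

variable {n1 n2 d : ℕ} (p : Fin n1 → Fin d → ℝ) (p' : Fin n2 → Fin d → ℝ)

theorem bipHyperMatrix_mulVec_apply (x : (Fin n1 ⊕ Fin n2) × Fin d → ℝ) (i : Fin n1)
    (j : Fin n2) :
    (bipHyperMatrix n1 n2 d p p' *ᵥ x) (i, j) =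
      p' j ⬝ᵥ Function.curry x (.inl i) - p i ⬝ᵥ Function.curry x (.inr j) := by
  simp [bipHyperMatrix, mulVec, dotProduct, Fintype.sum_prod_type, Fintype.sum_sum_type,
    ite_mul, sub_eq_add_neg, mul_comm]

theorem mem_ker_bipHyperMatrix_iff (x : (Fin n1 ⊕ Fin n2) × Fin d → ℝ) :
    x ∈ LinearMap.ker (bipHyperMatrix n1 n2 d p p').mulVecLin ↔
      ∀ i j, p' j ⬝ᵥ Function.curry x (.inl i) = p i ⬝ᵥ Function.curry x (.inr j) := by
  simp only [LinearMap.mem_ker, mulVecLin_apply, funext_iff, Prod.forall,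
    bipHyperMatrix_mulVec_apply, Pi.zero_apply, sub_eq_zero]

def bipHyperKernelMap : Matrix (Fin d) (Fin d) ℝ →ₗ[ℝ] ((Fin n1 ⊕ Fin n2) × Fin d → ℝ) where
  toFun A c := Sum.elim (fun i => A *ᵥ p i) (fun j => Aᵀ *ᵥ p' j) c.1 c.2
  map_add' A B := by ext ⟨i | j, k⟩ <;> simp [add_mulVec]
  map_smul' r A := by ext ⟨i | j, k⟩ <;> simp [smul_mulVec]

theorem bipHyperKernelMap_mem_ker (A : Matrix (Fin d) (Fin d) ℝ) :
    bipHyperKernelMap p p' A ∈ LinearMap.ker (bipHyperMatrix n1 n2 d p p').mulVecLin := by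
  rw [mem_ker_bipHyperMatrix_iff]
  intro i j
  change p' j ⬝ᵥ A *ᵥ p i = p i ⬝ᵥ Aᵀ *ᵥ p' j
  rw [mulVec_transpose, dotProduct_mulVec, dotProduct_comm]

theorem bipHyperKernelMap_injective (hspan : span ℝ (Set.range p) = ⊤) :
    Function.Injective (bipHyperKernelMap p p') := by
  rw [← LinearMap.ker_eq_bot, LinearMap.ker_eq_bot']
  intro A hA
  refine toLin'.injective (LinearMap.ext_on_range hspan fun i => funext fun k => ?_)
  simpa [bipHyperKernelMap] using congr_fun hA (Sum.inl i, k)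

theorem ker_bipHyperMatrix_le_range (hspan : span ℝ (Set.range p) = ⊤)
    (hspan' : span ℝ (Set.range p') = ⊤) :
    LinearMap.ker (bipHyperMatrix n1 n2 d p p').mulVecLin ≤
      LinearMap.range (bipHyperKernelMap p p') := by
  intro x hx
  rw [mem_ker_bipHyperMatrix_iff] at hx
  obtain ⟨A, hA⟩ : ∃ A : Matrix (Fin d) (Fin d) ℝ, ∀ i, A *ᵥ p i = Function.curry x (.inl i) := by
    refine exists_matrix_mulVec_eq_of_span_eq_top hspan fun c hc => ?_
    refine eq_zero_of_forall_dotProduct_eq_zero_of_span_eq_top hspan' fun j => ?_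
    simp only [dotProduct_sum, dotProduct_smul, hx, ← smul_dotProduct, ← sum_dotProduct, hc,
      zero_dotProduct]
  have hAt : ∀ j, Aᵀ *ᵥ p' j = Function.curry x (.inr j) := fun j => by
    rw [← sub_eq_zero]
    refine eq_zero_of_forall_dotProduct_eq_zero_of_span_eq_top hspan fun i => ?_
    rw [dotProduct_sub, mulVec_transpose, dotProduct_comm (p i), ← dotProduct_mulVec, hA, hx,
      sub_self]
  refine ⟨A, funext fun ⟨s, k⟩ => ?_⟩
  cases s with
  | inl i => exact congr_fun (hA i) k
  | inr j => exact congr_fun (hAt j) k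

theorem range_bipHyperKernelMap (hspan : span ℝ (Set.range p) = ⊤)
    (hspan' : span ℝ (Set.range p') = ⊤) :
    LinearMap.range (bipHyperKernelMap p p') =
      LinearMap.ker (bipHyperMatrix n1 n2 d p p').mulVecLin := by
  refine le_antisymm ?_ (ker_bipHyperMatrix_le_range p p' hspan hspan')
  rintro _ ⟨A, rfl⟩
  exact bipHyperKernelMap_mem_ker p p' A

theorem finrank_ker_bipHyperMatrix (hspan : span ℝ (Set.range p) = ⊤)
    (hspan' : span ℝ (Set.range p') = ⊤) :
    Module.finrank ℝ (LinearMap.ker (bipHyperMatrix n1 n2 d p p').mulVecLin) = d * d := by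
  rw [← range_bipHyperKernelMap p p' hspan hspan',
    LinearMap.finrank_range_of_inj (bipHyperKernelMap_injective p p' hspan),
    Module.finrank_matrix, Module.finrank_self, Fintype.card_fin, mul_one]

end BipHyperMatrix

theorem bipHyperMatrix_rank_general (n1 n2 d : ℕ)
    (p : Fin n1 → Fin d → ℝ) (p' : Fin n2 → Fin d → ℝ)
    (hspan : Submodule.span ℝ (Set.range p) = ⊤)
    (hspan' : Submodule.span ℝ (Set.range p') = ⊤) :
    (bipHyperMatrix n1 n2 d p p').rank = d * (n1 + n2) - d ^ 2 := by
  have hrn := LinearMap.finrank_range_add_finrank_ker (bipHyperMatrix n1 n2 d p p').mulVecLin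
  rw [finrank_ker_bipHyperMatrix p p' hspan hspan', Module.finrank_fintype_fun_eq_card] at hrn
  simp only [Fintype.card_prod, Fintype.card_sum, Fintype.card_fin] at hrn
  rw [rank, pow_two, mul_comm d (n1 + n2)]
  exact Nat.eq_sub_of_add_eq hrn

/-- If each side of `K_{n1,n2}` linearly spans `ℝ^d` and `min(n1,n2) ≥ d`, then the
rank of the bipartite hyperconnectivity matrix equals `d(n1+n2) - d²`. -/
theorem bipHyperMatrix_rank (n1 n2 d : ℕ) (hd : d ≤ min n1 n2)
    (p : Fin n1 → Fin d → ℝ) (p' : Fin n2 → Fin d → ℝ)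
    (hspan : Submodule.span ℝ (Set.range p) = ⊤)
    (hspan' : Submodule.span ℝ (Set.range p') = ⊤) :
    (bipHyperMatrix n1 n2 d p p').rank = d * (n1 + n2) - d ^ 2 :=
  bipHyperMatrix_rank_general n1 n2 d p p' hspan hspan'
end

section
/- Let a_3, a_4, b_3, b_4 be reals with 1 < a_3 < a_4 and 1 < b_3 < b_4. If a_3/(a_3−1) > b_3/(b_3−1) and (a_4−1)/(a_4−a_3) > (b_4−1)/(b_4−b_3), then a_4/(a_4−1) > b_4/(b_4−1). -/
/-- Normalized form of the transitivity of "correct location": if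
`a_3/(a_3-1) > b_3/(b_3-1)` and `(a_4-1)/(a_4-a_3) > (b_4-1)/(b_4-b_3)` with
`1 < a_3 < a_4` and `1 < b_3 < b_4`, then `a_4/(a_4-1) > b_4/(b_4-1)`. -/
theorem correct_location_transitive (a3 a4 b3 b4 : ℝ)
    (ha3 : 1 < a3) (ha34 : a3 < a4) (hb3 : 1 < b3) (hb34 : b3 < b4)
    (h1 : a3 / (a3 - 1) > b3 / (b3 - 1))
    (h2 : (a4 - 1) / (a4 - a3) > (b4 - 1) / (b4 - b3)) :
    a4 / (a4 - 1) > b4 / (b4 - 1) := by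
  have ha3' : (0:ℝ) < a3 - 1 := by linarith
  have hb3' : (0:ℝ) < b3 - 1 := by linarith
  have ha4' : (0:ℝ) < a4 - 1 := by linarith
  have hb4' : (0:ℝ) < b4 - 1 := by linarith
  have hda : (0:ℝ) < a4 - a3 := by linarith
  have hdb : (0:ℝ) < b4 - b3 := by linarith
  rw [gt_iff_lt, div_lt_div_iff₀ hb3' ha3'] at h1
  rw [gt_iff_lt, div_lt_div_iff₀ hdb hda] at h2
  have hab3 : a3 < b3 := by nlinarith
  have hab4 : a4 < b4 := by nlinarith
  rw [gt_iff_lt, div_lt_div_iff₀ hb4' ha4']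
  nlinarith
end

section
/- There exist real parameters t_1 < … < t_{k+2} and t'_1 < … < t'_{k+2} such that for all indices 1 ≤ i_1 < i_2 < i_3 ≤ k+1 and 1 ≤ j_1 < j_2 < j_3 ≤ k+1 the inequality (t_{i_1},t_{i_2};t_{i_3},t_{k+2}) > (t'_{j_1},t'_{j_2};t'_{j_3},t'_{k+2}) holds, where (a,b;c,d) denotes the cross-ratio ((c−a)(d−b))/((d−a)(c−b)). In particular, one may take t_{k+2} = t'_{k+2} sufficiently large, t_{k+1}=t'_{k+1}=1, t_k=t'_k=0, and t_i lexicographically much smaller than t_{i+1}. -/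
/-- The cross-ratio of four reals. -/
noncomputable def crossRatio (a b c d : ℝ) : ℝ := ((c - a) * (d - b)) / ((d - a) * (c - b))

lemma crossRatio_key (a b c d a' b' c' d' : ℝ)
    (hab : a < b) (hbc : b < c) (hcd : c < d)
    (hab' : a' < b') (hbc' : b' < c') (hcd' : c' < d')
    (h1 : c' - a' ≤ 2 * (c' - b'))
    (h2 : 6 * (c - b) ≤ c - a)
    (h3 : d - a ≤ 2 * (d - b)) :
    crossRatio a' b' c' d' < crossRatio a b c d := by
  have hd1 : 0 < (d - a) * (c - b) := by
    apply mul_pos <;> linarith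
  have hd1' : 0 < (d' - a') * (c' - b') := by
    apply mul_pos <;> linarith
  have hlt : crossRatio a' b' c' d' < 2 := by
    rw [crossRatio, div_lt_iff₀ hd1']
    nlinarith [mul_pos (sub_pos.2 hbc') (sub_pos.2 (hab'.trans (hbc'.trans hcd')))]
  have hge : (3:ℝ) ≤ crossRatio a b c d := by
    rw [crossRatio, le_div_iff₀ hd1]
    nlinarith [mul_pos (sub_pos.2 hbc) (sub_pos.2 (hbc.trans hcd))]
  linarith

/-- For every `k` there exist increasing parameters `t_1 < … < t_{k+2}` and
`t'_1 < … < t'_{k+2}` such that for all `i_1 < i_2 < i_3 ≤ k+1` and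
`j_1 < j_2 < j_3 ≤ k+1` the cross-ratio `(t_{i_1},t_{i_2};t_{i_3},t_{k+2})` is
strictly greater than `(t'_{j_1},t'_{j_2};t'_{j_3},t'_{k+2})`. -/
theorem exists_correctly_located_configuration (k : ℕ) :
    ∃ t t' : Fin (k + 2) → ℝ, StrictMono t ∧ StrictMono t' ∧
      ∀ i1 i2 i3 j1 j2 j3 : Fin (k + 2),
        i1 < i2 → i2 < i3 → (i3 : ℕ) < k + 1 →
        j1 < j2 → j2 < j3 → (j3 : ℕ) < k + 1 →
        crossRatio (t' j1) (t' j2) (t' j3) (t' (Fin.last (k + 1))) <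
          crossRatio (t i1) (t i2) (t i3) (t (Fin.last (k + 1))) := by
  refine ⟨fun i => if (i : ℕ) = k + 1 then (7:ℝ)^(k+2) else -(7:ℝ)^(k+1-(i:ℕ)),
         fun j => if (j : ℕ) = k + 1 then (2:ℝ)^(k+2) else (2:ℝ)^(j:ℕ), ?_, ?_, ?_⟩
  · intro i j hij
    have hi : (i:ℕ) < k + 1 := lt_of_lt_of_le hij (Nat.lt_succ_iff.mp j.isLt)
    simp only [Nat.ne_of_lt hi, if_neg, if_false]
    by_cases hj : (j:ℕ) = k + 1
    · rw [if_pos hj]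
      have h1 : (0:ℝ) < (7:ℝ)^(k+2) := by positivity
      have h2 : (0:ℝ) < (7:ℝ)^(k+1-(i:ℕ)) := by positivity
      linarith
    · rw [if_neg hj]
      have hj' : (j:ℕ) < k + 1 := lt_of_le_of_ne (Nat.lt_succ_iff.mp j.isLt) hj
      have : (7:ℝ)^(k+1-(j:ℕ)) < (7:ℝ)^(k+1-(i:ℕ)) := by
        apply pow_lt_pow_right₀ (by norm_num)
        omega
      linarith
  · intro i j hij
    have hi : (i:ℕ) < k + 1 := lt_of_lt_of_le hij (Nat.lt_succ_iff.mp j.isLt)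
    simp only [Nat.ne_of_lt hi, if_neg, if_false]
    by_cases hj : (j:ℕ) = k + 1
    · rw [if_pos hj]
      exact pow_lt_pow_right₀ (by norm_num) (by omega)
    · rw [if_neg hj]
      exact pow_lt_pow_right₀ (by norm_num) hij
  · intro i1 i2 i3 j1 j2 j3 h12 h23 h3 g12 g23 g3
    have h23n : (i2:ℕ) < (i3:ℕ) := h23
    have h12n : (i1:ℕ) < (i2:ℕ) := h12
    have g23n : (j2:ℕ) < (j3:ℕ) := g23
    have g12n : (j1:ℕ) < (j2:ℕ) := g12
    have h2' : (i2:ℕ) < k + 1 := by omega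
    have h1' : (i1:ℕ) < k + 1 := by omega
    have g2' : (j2:ℕ) < k + 1 := by omega
    have g1' : (j1:ℕ) < k + 1 := by omega
    simp only [Fin.val_last, if_pos rfl, Nat.ne_of_lt h1', Nat.ne_of_lt h2', Nat.ne_of_lt h3,
      Nat.ne_of_lt g1', Nat.ne_of_lt g2', Nat.ne_of_lt g3, if_neg, if_false, if_true]
    apply crossRatio_key
    -- a < b
    · have : (7:ℝ)^(k+1-(i2:ℕ)) < (7:ℝ)^(k+1-(i1:ℕ)) :=
        pow_lt_pow_right₀ (by norm_num) (by omega)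
      linarith
    · have : (7:ℝ)^(k+1-(i3:ℕ)) < (7:ℝ)^(k+1-(i2:ℕ)) :=
        pow_lt_pow_right₀ (by norm_num) (by omega)
      linarith
    · have h1 : (0:ℝ) < (7:ℝ)^(k+2) := by positivity
      have h2 : (0:ℝ) < (7:ℝ)^(k+1-(i3:ℕ)) := by positivity
      linarith
    · exact pow_lt_pow_right₀ (by norm_num) g12
    · exact pow_lt_pow_right₀ (by norm_num) g23
    · exact pow_lt_pow_right₀ (by norm_num) (by omega)
    -- h1 : c' - a' ≤ 2*(c' - b')
    · have e1 : (2:ℝ)^((j2:ℕ)+1) ≤ (2:ℝ)^(j3:ℕ) :=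
        pow_le_pow_right₀ (by norm_num) (by omega)
      have e2 : (0:ℝ) < (2:ℝ)^(j1:ℕ) := by positivity
      have e3 : ((2:ℝ))^((j2:ℕ)+1) = 2 * (2:ℝ)^(j2:ℕ) := by ring
      linarith
    -- h2 : 6*(c-b) ≤ c - a
    · have e1 : (7:ℝ)^((k+1-(i2:ℕ))+1) ≤ (7:ℝ)^(k+1-(i1:ℕ)) :=
        pow_le_pow_right₀ (by norm_num) (by omega)
      have e2 : (0:ℝ) < (7:ℝ)^(k+1-(i3:ℕ)) := by positivity
      have e3 : ((7:ℝ))^((k+1-(i2:ℕ))+1) = 7 * (7:ℝ)^(k+1-(i2:ℕ)) := by ring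
      have e4 : (0:ℝ) < (7:ℝ)^(k+1-(i2:ℕ)) := by positivity
      linarith
    -- h3 : d - a ≤ 2*(d - b)
    · have e1 : (7:ℝ)^(k+1-(i1:ℕ)) ≤ (7:ℝ)^(k+2) :=
        pow_le_pow_right₀ (by norm_num) (by omega)
      have e2 : (0:ℝ) < (7:ℝ)^(k+1-(i2:ℕ)) := by positivity
      linarith
end

section
/- Let f: ℝ^{n1×k} × ℝ^{k×n2} → ℝ^{n1×n2} be the matrix product map f(A,B) = AB. Then the partial derivatives of the (i,j) entry are ∂(AB)_{ij}/∂A_{rs} = δ_{ir} B_{sj} and ∂(AB)_{ij}/∂B_{st} = δ_{jt} A_{is}; consequently the row of the Jacobian of f at (A,B) indexed by (i,j) coincides with the row of edge (i,j') in the bipartite hyperconnectivity matrix of the points given by the rows a_1,…,a_{n1} of A and the columns b_1,…,b_{n2} of B in ℝ^k. -/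
open Finset

/-- The matrix product map `f(A,B) = AB`. -/
def matMul (n1 n2 k : ℕ) (AB : (Fin n1 → Fin k → ℝ) × (Fin k → Fin n2 → ℝ)) :
    Fin n1 → Fin n2 → ℝ :=
  fun i j => ∑ s, AB.1 i s * AB.2 s j

/-- The single-entry matrix with a `1` in position `(r,s)`. -/
def unitMat {m n : ℕ} (r : Fin m) (s : Fin n) : Fin m → Fin n → ℝ :=
  fun a b => if a = r ∧ b = s then 1 else 0

/-- The row of edge `(i,j')` in the bipartite hyperconnectivity matrix of the points
given by the rows `a_i` of `A` and the columns `b_j` of `B` in `ℝ^k`. -/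
def bipRow (n1 n2 k : ℕ) (A : Fin n1 → Fin k → ℝ) (B : Fin k → Fin n2 → ℝ)
    (i : Fin n1) (j : Fin n2) : (Fin n1 × Fin k) ⊕ (Fin k × Fin n2) → ℝ
  | Sum.inl (r, s) => if r = i then B s j else 0
  | Sum.inr (s, t) => if t = j then A i s else 0

/- The product map is bilinear, so its derivative at `(A, B)` sends `(U, V)` to `AV + UB`;
evaluating on the matrix units `E_rs` leaves a single row of `B` or column of `A`. -/

section MatMul

variable {n1 n2 k : ℕ}

theorem matMul_add_left (A A' : Fin n1 → Fin k → ℝ) (B : Fin k → Fin n2 → ℝ) :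
    matMul n1 n2 k (A + A', B) = matMul n1 n2 k (A, B) + matMul n1 n2 k (A', B) := by
  ext i j
  simp [matMul, add_mul, sum_add_distrib]

theorem matMul_add_right (A : Fin n1 → Fin k → ℝ) (B B' : Fin k → Fin n2 → ℝ) :
    matMul n1 n2 k (A, B + B') = matMul n1 n2 k (A, B) + matMul n1 n2 k (A, B') := by
  ext i j
  simp [matMul, mul_add, sum_add_distrib]

theorem matMul_smul_left (c : ℝ) (A : Fin n1 → Fin k → ℝ) (B : Fin k → Fin n2 → ℝ) :
    matMul n1 n2 k (c • A, B) = c • matMul n1 n2 k (A, B) := by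
  ext i j
  simp [matMul, mul_sum, mul_assoc]

theorem matMul_smul_right (c : ℝ) (A : Fin n1 → Fin k → ℝ) (B : Fin k → Fin n2 → ℝ) :
    matMul n1 n2 k (A, c • B) = c • matMul n1 n2 k (A, B) := by
  ext i j
  simp [matMul, mul_sum, mul_left_comm]

theorem isBilinearMap_matMul :
    IsBilinearMap ℝ fun (A : Fin n1 → Fin k → ℝ) (B : Fin k → Fin n2 → ℝ) ↦ matMul n1 n2 k (A, B) :=
  ⟨matMul_add_left, matMul_smul_left, matMul_add_right, matMul_smul_right⟩

theorem isBoundedBilinearMap_matMul : IsBoundedBilinearMap ℝ (matMul n1 n2 k) :=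
  isBilinearMap_matMul.toContinuousBilinearMap.isBoundedBilinearMap

theorem fderiv_matMul_apply (A U : Fin n1 → Fin k → ℝ) (B V : Fin k → Fin n2 → ℝ) :
    fderiv ℝ (matMul n1 n2 k) (A, B) (U, V) = matMul n1 n2 k (A, V) + matMul n1 n2 k (U, B) := by
  rw [isBoundedBilinearMap_matMul.fderiv]
  rfl

theorem matMul_zero_left (B : Fin k → Fin n2 → ℝ) : matMul n1 n2 k (0, B) = 0 := by
  ext i j
  simp [matMul]

theorem matMul_zero_right (A : Fin n1 → Fin k → ℝ) : matMul n1 n2 k (A, 0) = 0 := by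
  ext i j
  simp [matMul]

theorem matMul_unitMat_left (r : Fin n1) (s : Fin k) (B : Fin k → Fin n2 → ℝ)
    (i : Fin n1) (j : Fin n2) :
    matMul n1 n2 k (unitMat r s, B) i j = if i = r then B s j else 0 := by
  by_cases h : i = r <;> simp [matMul, unitMat, h]

theorem matMul_unitMat_right (A : Fin n1 → Fin k → ℝ) (s : Fin k) (t : Fin n2)
    (i : Fin n1) (j : Fin n2) :
    matMul n1 n2 k (A, unitMat s t) i j = if j = t then A i s else 0 := by
  by_cases h : j = t <;> simp [matMul, unitMat, h]

end MatMul

/-- The partial derivatives of the `(i,j)` entry of the matrix product are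
`∂(AB)_{ij}/∂A_{rs} = δ_{ir} B_{sj}` and `∂(AB)_{ij}/∂B_{st} = δ_{jt} A_{is}`;
hence the row of the Jacobian of the product map indexed by `(i,j)` coincides with
the row of edge `(i,j')` in the bipartite hyperconnectivity matrix of the rows of `A`
and the columns of `B`. -/
theorem jacobian_matMul_eq_hyperRow (n1 n2 k : ℕ)
    (A : Fin n1 → Fin k → ℝ) (B : Fin k → Fin n2 → ℝ) :
    (∀ (i : Fin n1) (j : Fin n2) (r : Fin n1) (s : Fin k),
      fderiv ℝ (matMul n1 n2 k) (A, B) (unitMat r s, 0) i j =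
        if i = r then B s j else 0) ∧
    (∀ (i : Fin n1) (j : Fin n2) (s : Fin k) (t : Fin n2),
      fderiv ℝ (matMul n1 n2 k) (A, B) (0, unitMat s t) i j =
        if j = t then A i s else 0) ∧
    (∀ (i : Fin n1) (j : Fin n2) (c : (Fin n1 × Fin k) ⊕ (Fin k × Fin n2)),
      (match c with
        | Sum.inl (r, s) => fderiv ℝ (matMul n1 n2 k) (A, B) (unitMat r s, 0) i j
        | Sum.inr (s, t) => fderiv ℝ (matMul n1 n2 k) (A, B) (0, unitMat s t) i j) =
        bipRow n1 n2 k A B i j c) := by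
  have hA : ∀ (i : Fin n1) (j : Fin n2) (r : Fin n1) (s : Fin k),
      fderiv ℝ (matMul n1 n2 k) (A, B) (unitMat r s, 0) i j = if i = r then B s j else 0 := by
    intro i j r s
    rw [fderiv_matMul_apply, matMul_zero_right, zero_add, matMul_unitMat_left]
  have hB : ∀ (i : Fin n1) (j : Fin n2) (s : Fin k) (t : Fin n2),
      fderiv ℝ (matMul n1 n2 k) (A, B) (0, unitMat s t) i j = if j = t then A i s else 0 := by
    intro i j s t
    rw [fderiv_matMul_apply, matMul_zero_left, add_zero, matMul_unitMat_right]
  refine ⟨hA, hB, ?_⟩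
  rintro i j (⟨r, s⟩ | ⟨s, t⟩)
  · simp only [bipRow, hA, eq_comm]
  · simp only [bipRow, hB, eq_comm]
end

section
/- Let G be a bipartite graph with parts X and Y and let p: X ∪ Y → ℝ^{d−1} be positions. Then a vector λ indexed by the edges of G is a self-stress of the d-dimensional bar-and-joint framework with positions q_i = (p_i, 0) for i ∈ X and q_j = (p_j, 1) for j ∈ Y if and only if λ is a linear dependence among the rows of the d-dimensional hyperconnectivity matrix of G with vectors (p_i, 1), i ∈ X ∪ Y. In particular the two matroids on the edge set of G coincide. -/
open Finset

variable {X Y : Type*}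

/-- Positions of the `(d+1)`-dimensional bar-and-joint framework: the points of `X`
at height `0` and the points of `Y` at height `1`. -/
noncomputable def barJointPos (d : ℕ) (p : X ⊕ Y → Fin d → ℝ) (v : X ⊕ Y) :
    Fin (d + 1) → ℝ :=
  Fin.snoc (p v) (match v with | Sum.inl _ => 0 | Sum.inr _ => 1)

/-- The row of edge `(x,y)` in the bar-and-joint rigidity matrix. -/
noncomputable def rigidityRow (d : ℕ) [DecidableEq X] [DecidableEq Y]
    (p : X ⊕ Y → Fin d → ℝ) (e : X × Y) : (X ⊕ Y) × Fin (d + 1) → ℝ :=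
  fun c =>
    if c.1 = Sum.inl e.1 then
      barJointPos d p (Sum.inl e.1) c.2 - barJointPos d p (Sum.inr e.2) c.2
    else if c.1 = Sum.inr e.2 then
      barJointPos d p (Sum.inr e.2) c.2 - barJointPos d p (Sum.inl e.1) c.2
    else 0

/-- The row of edge `(x,y)` in the `(d+1)`-dimensional hyperconnectivity matrix of the
vectors `(p_v, 1)`. -/
noncomputable def hyperRow (d : ℕ) [DecidableEq X] [DecidableEq Y]
    (p : X ⊕ Y → Fin d → ℝ) (e : X × Y) : (X ⊕ Y) × Fin (d + 1) → ℝ :=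
  fun c =>
    if c.1 = Sum.inl e.1 then (Fin.snoc (p (Sum.inr e.2)) (1 : ℝ) : Fin (d + 1) → ℝ) c.2
    else if c.1 = Sum.inr e.2 then -((Fin.snoc (p (Sum.inl e.1)) (1 : ℝ) : Fin (d + 1) → ℝ) c.2)
    else 0

namespace BRH

variable {d : ℕ} [DecidableEq X] [DecidableEq Y]

noncomputable def A : X ⊕ Y → ℝ := fun v => match v with | .inl _ => -1 | .inr _ => 1

noncomputable def B (p : X ⊕ Y → Fin d → ℝ) : (X ⊕ Y) → Fin (d + 1) → ℝ := fun v k =>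
  match v with
  | .inl x => -((Fin.snoc (p (.inl x)) (0:ℝ) : Fin (d+1) → ℝ) k)
  | .inr y => -(((Fin.snoc (p (.inr y)) (1:ℝ) : Fin (d+1) → ℝ) k) + (if k = Fin.last d then 1 else 0))

lemma snoc_one_eq (f : Fin d → ℝ) (k : Fin (d + 1)) :
    (Fin.snoc f (1:ℝ) : Fin (d + 1) → ℝ) k =
      (Fin.snoc f (0:ℝ) : Fin (d + 1) → ℝ) k + (if k = Fin.last d then 1 else 0) := by
  induction k using Fin.lastCases with
  | last => simp
  | cast i => simp [Fin.snoc_castSucc, (Fin.castSucc_lt_last i).ne]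

variable (p : X ⊕ Y → Fin d → ℝ)

lemma hyper_eq (e : X × Y) (v : X ⊕ Y) (k : Fin (d + 1)) :
    hyperRow d p e (v, k) =
      A v * rigidityRow d p e (v, k) + B p v k * rigidityRow d p e (v, Fin.last d) := by
  cases v with
  | inl x =>
    by_cases hx : x = e.1
    · subst hx
      simp [hyperRow, rigidityRow, A, B, barJointPos, Fin.snoc_last]
      try ring
    · simp [hyperRow, rigidityRow, A, B, hx]
  | inr y =>
    by_cases hy : y = e.2
    · subst hy
      simp [hyperRow, rigidityRow, A, B, barJointPos, Fin.snoc_last,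
        snoc_one_eq]
      try ring
    · simp [hyperRow, rigidityRow, A, B, hy]

lemma rigid_eq (e : X × Y) (v : X ⊕ Y) (k : Fin (d + 1)) :
    rigidityRow d p e (v, k) =
      A v * hyperRow d p e (v, k) + (A v * B p v k) * hyperRow d p e (v, Fin.last d) := by
  cases v with
  | inl x =>
    by_cases hx : x = e.1
    · subst hx
      simp [hyperRow, rigidityRow, A, B, barJointPos, Fin.snoc_last]
      try ring
    · simp [hyperRow, rigidityRow, A, B, hx]
  | inr y =>
    by_cases hy : y = e.2
    · subst hy
      simp [hyperRow, rigidityRow, A, B, barJointPos, Fin.snoc_last,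
        snoc_one_eq]
      try ring
    · simp [hyperRow, rigidityRow, A, B, hy]

lemma sum_hyper_of_sum_rigid (G : Finset (X × Y)) (lam : X × Y → ℝ)
    (h : ∑ e ∈ G, lam e • rigidityRow d p e = 0) :
    ∑ e ∈ G, lam e • hyperRow d p e = 0 := by
  funext c
  obtain ⟨v, k⟩ := c
  have h1 := congrFun h (v, k)
  have h2 := congrFun h (v, Fin.last d)
  simp only [Finset.sum_apply, Pi.smul_apply, Pi.zero_apply, smul_eq_mul] at h1 h2 ⊢
  calc ∑ e ∈ G, lam e * hyperRow d p e (v, k)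
      = ∑ e ∈ G, (A v * (lam e * rigidityRow d p e (v, k)) +
          B p v k * (lam e * rigidityRow d p e (v, Fin.last d))) := by
        refine Finset.sum_congr rfl fun e _ => ?_
        rw [hyper_eq]; ring
    _ = A v * ∑ e ∈ G, lam e * rigidityRow d p e (v, k) +
        B p v k * ∑ e ∈ G, lam e * rigidityRow d p e (v, Fin.last d) := by
        rw [Finset.sum_add_distrib, Finset.mul_sum, Finset.mul_sum]
    _ = 0 := by rw [h1, h2]; ring

lemma sum_rigid_of_sum_hyper (G : Finset (X × Y)) (lam : X × Y → ℝ)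
    (h : ∑ e ∈ G, lam e • hyperRow d p e = 0) :
    ∑ e ∈ G, lam e • rigidityRow d p e = 0 := by
  funext c
  obtain ⟨v, k⟩ := c
  have h1 := congrFun h (v, k)
  have h2 := congrFun h (v, Fin.last d)
  simp only [Finset.sum_apply, Pi.smul_apply, Pi.zero_apply, smul_eq_mul] at h1 h2 ⊢
  calc ∑ e ∈ G, lam e * rigidityRow d p e (v, k)
      = ∑ e ∈ G, (A v * (lam e * hyperRow d p e (v, k)) +
          (A v * B p v k) * (lam e * hyperRow d p e (v, Fin.last d))) := by
        refine Finset.sum_congr rfl fun e _ => ?_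
        rw [rigid_eq]; ring
    _ = A v * ∑ e ∈ G, lam e * hyperRow d p e (v, k) +
        (A v * B p v k) * ∑ e ∈ G, lam e * hyperRow d p e (v, Fin.last d) := by
        rw [Finset.sum_add_distrib, Finset.mul_sum, Finset.mul_sum]
    _ = 0 := by rw [h1, h2]; ring

lemma li_transfer {R H : X × Y → (X ⊕ Y) × Fin (d + 1) → ℝ} (G s : Finset (X × Y))
    (hs : s ⊆ G)
    (key : ∀ lam : X × Y → ℝ, ∑ e ∈ G, lam e • R e = 0 → ∑ e ∈ G, lam e • H e = 0)
    (hH : LinearIndependent ℝ (fun e : ↥s => H e)) :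
    LinearIndependent ℝ (fun e : ↥s => R e) := by
  rw [Fintype.linearIndependent_iff] at hH ⊢
  intro g hg i
  classical
  set lam : X × Y → ℝ := fun e => if h : e ∈ s then g ⟨e, h⟩ else 0 with hlam
  have hconv : ∀ (M : X × Y → (X ⊕ Y) × Fin (d + 1) → ℝ),
      ∑ e ∈ G, lam e • M e = ∑ i : ↥s, g i • M i := by
    intro M
    rw [← Finset.sum_subset hs (fun e _ he => by simp [hlam, he])]
    rw [Finset.univ_eq_attach, ← Finset.sum_attach s (fun e => lam e • M e)]
    exact Finset.sum_congr rfl fun i _ => by simp [hlam, i.2]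
  have h1 : ∑ e ∈ G, lam e • R e = 0 := by rw [hconv]; exact hg
  have h2 := key lam h1
  rw [hconv] at h2
  exact hH g h2 i

end BRH

/-- For a bipartite graph `G` with parts `X`, `Y` and positions `p` in `ℝ^d`, a vector
`λ` on the edges is a self-stress of the `(d+1)`-dimensional bar-and-joint framework
with positions `(p_i,0)`, `i ∈ X`, and `(p_j,1)`, `j ∈ Y`, iff it is a linear
dependence among the rows of the `(d+1)`-dimensional hyperconnectivity matrix of the
vectors `(p_v,1)`. In particular the two matroids on the edge set coincide. -/
theorem bipartite_rigidity_eq_hyperconnectivity (d : ℕ)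
    [DecidableEq X] [DecidableEq Y] (p : X ⊕ Y → Fin d → ℝ) (G : Finset (X × Y)) :
    (∀ lam : X × Y → ℝ,
      (∑ e ∈ G, lam e • rigidityRow d p e) = 0 ↔
        (∑ e ∈ G, lam e • hyperRow d p e) = 0) ∧
    (∀ s : Finset (X × Y), s ⊆ G →
      (LinearIndependent ℝ (fun e : ↥s => rigidityRow d p e) ↔
        LinearIndependent ℝ (fun e : ↥s => hyperRow d p e))) := by
  refine ⟨fun lam => ⟨BRH.sum_hyper_of_sum_rigid p G lam, BRH.sum_rigid_of_sum_hyper p G lam⟩,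
    fun s hs => ⟨fun h => ?_, fun h => ?_⟩⟩
  · exact BRH.li_transfer G s hs (BRH.sum_rigid_of_sum_hyper p G) h
  · exact BRH.li_transfer G s hs (BRH.sum_hyper_of_sum_rigid p G) h
end
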